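/- Let z, z', z* ∈ ℝ² be affinely independent, T := convexHull{z, z', z*}, let φ_z and φ_{z'} be the barycentric coordinates of T at z and z' respectively, μ := (z − z')/‖z − z'‖, d* := 2·area(T)/‖z − z'‖, and let κ ∈ ℝ. Define the vector field τ(x) := κ·(d*)⁻¹·(φ_z(x) + φ_{z'}(x))·μ. Then: (a) τ is differentiable on ℝ² with divergence identically 0; (b) for every x in the edge [z', z], ⟨τ(x), ν⟩ = 0, where ν is the outward unit normal of the edge [z', z] of T; (c) for every x in the edge [z, z*] with outward unit normal ν'', one has ‖z* − z‖·⟨τ(x), ν''⟩ = κ·(φ_z(x) − φ_{z'}(x)), and for every x in the edge [z', z*] with outward unit normal ν''', one has ‖z* − z'‖·⟨τ(x), ν'''⟩ = κ·(φ_z(x) − φ_{z'}(x)). -/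

import Mathlib

open MeasureTheory
open scoped RealInnerProductSpace

noncomputable section

abbrev E2 : Type := EuclideanSpace ℝ (Fin 2)

/-- The divergence of a vector field on `ℝ²`: the trace of its Fréchet derivative. -/
def div2 (τ : E2 → E2) (x : E2) : ℝ :=
  ∑ i : Fin 2, ⟪fderiv ℝ τ x (EuclideanSpace.single i 1), EuclideanSpace.single i 1⟫

/-! τ is the constant vector `μ ∥ z - z'` scaled by the affine function `φ_z + φ_{z'}`, which
equals `1` at both `z` and `z'`; hence its divergence, the derivative of that function along `μ`,
vanishes, and so does its normal component on `[z', z]`. On `[z, z*]` (resp. `[z', z*]`) the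
coordinate `φ_{z'}` (resp. `φ_z`) vanishes, and what remains is "base times height equals twice
the area": `‖z* - z‖ · ⟪z - z', ν''⟫ = |det(z - z', z* - z')| = 2 area(T) = d* ‖z - z'‖`, and
likewise with a minus sign on `[z', z*]`. -/

open Set Module
open scoped Pointwise

def cross (u v : E2) : ℝ := u 0 * v 1 - u 1 * v 0

lemma inner_eq_coords (x y : E2) : ⟪x, y⟫ = x 0 * y 0 + x 1 * y 1 := by
  simp [PiLp.inner_apply, Fin.sum_univ_two, mul_comm]

lemma abs_inner_mul_norm_eq_abs_cross {n w : E2} (hn : ‖n‖ = 1) (hnw : ⟪n, w⟫ = 0) (u : E2) :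
    |⟪u, n⟫| * ‖w‖ = |cross w u| := by
  have hn' : n 0 * n 0 + n 1 * n 1 = 1 := by
    rw [← inner_eq_coords, real_inner_self_eq_norm_sq, hn, one_pow]
  rw [inner_eq_coords] at hnw
  have hfactor : ⟪u, n⟫ * cross w n = cross w u := by
    rw [inner_eq_coords]; unfold cross
    linear_combination (u 0 * n 1 - u 1 * n 0) * hnw + (u 1 * w 0 - u 0 * w 1) * hn'
  have hsq : cross w n ^ 2 = ‖w‖ ^ 2 := by
    rw [← real_inner_self_eq_norm_sq, inner_eq_coords]; unfold cross
    linear_combination (w 0 * w 0 + w 1 * w 1) * hn' - (n 0 * w 0 + n 1 * w 1) * hnw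
  rw [← hfactor, abs_mul, ← abs_norm w, (sq_eq_sq_iff_abs_eq_abs _ _).1 hsq]

lemma volume_stdTriangle_prod :
    volume {p : ℝ × ℝ | 0 ≤ p.1 ∧ 0 ≤ p.2 ∧ p.1 + p.2 ≤ 1} = ENNReal.ofReal (1 / 2) := by
  have hmeas : MeasurableSet {p : ℝ × ℝ | 0 ≤ p.1 ∧ 0 ≤ p.2 ∧ p.1 + p.2 ≤ 1} :=
    (measurableSet_le measurable_const measurable_fst).inter
      ((measurableSet_le measurable_const measurable_snd).inter
        (measurableSet_le (measurable_fst.add measurable_snd) measurable_const))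
  have hslice (x : ℝ) : volume (Prod.mk x ⁻¹' {p : ℝ × ℝ | 0 ≤ p.1 ∧ 0 ≤ p.2 ∧ p.1 + p.2 ≤ 1})
      = (Icc 0 1).indicator (fun x => ENNReal.ofReal (1 - x)) x := by
    by_cases hx : 0 ≤ x
    · have : Prod.mk x ⁻¹' {p : ℝ × ℝ | 0 ≤ p.1 ∧ 0 ≤ p.2 ∧ p.1 + p.2 ≤ 1} = Icc 0 (1 - x) := by
        ext y; simp [hx, le_sub_iff_add_le']
      rw [this, Real.volume_Icc, sub_zero, indicator_apply]
      split_ifs with h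
      · rfl
      · exact ENNReal.ofReal_of_nonpos (sub_nonpos.2 (not_le.1 fun h1 => h ⟨hx, h1⟩).le)
    · simp [hx]
  have hint : ∫ x in (0 : ℝ)..1, (1 - x) = 1 / 2 := by
    rw [intervalIntegral.integral_sub intervalIntegrable_const
      intervalIntegral.intervalIntegrable_id, integral_id]
    norm_num
  rw [Measure.volume_eq_prod, Measure.prod_apply hmeas]
  simp_rw [hslice]
  rw [lintegral_indicator measurableSet_Icc, ← ofReal_integral_eq_lintegral_ofReal,
    integral_Icc_eq_integral_Ioc, ← intervalIntegral.integral_of_le zero_le_one, hint]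
  · exact (continuous_const.sub continuous_id).integrableOn_Icc
  · exact (ae_restrict_iff' measurableSet_Icc).2 (ae_of_all _ fun x hx => sub_nonneg.2 hx.2)

lemma volume_stdTriangle :
    volume {x : E2 | 0 ≤ x 0 ∧ 0 ≤ x 1 ∧ x 0 + x 1 ≤ 1} = ENNReal.ofReal (1 / 2) := by
  rw [← volume_stdTriangle_prod]
  exact ((volume_preserving_finTwoArrow ℝ).comp
    (EuclideanSpace.volume_preserving_symm_measurableEquiv_toLp (Fin 2))).measure_preimage_equiv
    (f := (MeasurableEquiv.toLp 2 (Fin 2 → ℝ)).symm.trans MeasurableEquiv.finTwoArrow)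
    {p : ℝ × ℝ | 0 ≤ p.1 ∧ 0 ≤ p.2 ∧ p.1 + p.2 ≤ 1}

lemma convexHull_zero_single_single :
    convexHull ℝ {0, EuclideanSpace.single 0 1, EuclideanSpace.single 1 1}
      = {x : E2 | 0 ≤ x 0 ∧ 0 ≤ x 1 ∧ x 0 + x 1 ≤ 1} := by
  apply Subset.antisymm
  · refine convexHull_min ?_ ?_
    · rintro p (rfl | rfl | rfl) <;> simp
    · intro p hp q hq a b ha hb hab
      simp only [mem_ofPred_eq, PiLp.add_apply, PiLp.smul_apply, smul_eq_mul] at hp hq ⊢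
      refine ⟨by nlinarith, by nlinarith, by nlinarith⟩
  · rintro x ⟨h0, h1, h01⟩
    have hx : x = ∑ i, ![1 - x 0 - x 1, x 0, x 1] i •
        ![0, EuclideanSpace.single 0 1, EuclideanSpace.single 1 1] i := by
      ext i; fin_cases i <;> simp [Fin.sum_univ_three]
    rw [hx]
    refine (convex_convexHull ℝ _).sum_mem (fun i _ => ?_) ?_
      (fun i _ => subset_convexHull ℝ _ ?_)
    · fin_cases i <;> simp <;> linarith
    · simp [Fin.sum_univ_three]; ring
    · fin_cases i <;> simp

lemma basisFun_det_eq_cross (u v : E2) :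
    (EuclideanSpace.basisFun (Fin 2) ℝ).toBasis.det ![u, v] = cross u v := by
  simp [Module.Basis.det_apply, Matrix.det_fin_two, Module.Basis.toMatrix_apply, cross, mul_comm]

lemma volume_convexHull_zero_triangle (u v : E2) :
    volume (convexHull ℝ {0, u, v}) = ENNReal.ofReal (|cross u v| / 2) := by
  set b := (EuclideanSpace.basisFun (Fin 2) ℝ).toBasis
  set f : E2 →ₗ[ℝ] E2 := b.constr ℕ ![u, v]
  have himage : f '' convexHull ℝ {0, EuclideanSpace.single 0 1, EuclideanSpace.single 1 1}
      = convexHull ℝ {0, u, v} := by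
    rw [f.image_convexHull]
    simp [image_insert_eq, f, b]
  have hdet : LinearMap.det f = cross u v := by
    rw [← LinearMap.det_toMatrix b, ← Module.Basis.toMatrix_eq_toMatrix_constr,
      ← Module.Basis.det_apply, basisFun_det_eq_cross]
  rw [← himage, Measure.addHaar_image_linearMap, convexHull_zero_single_single,
    volume_stdTriangle, hdet, ← ENNReal.ofReal_mul (abs_nonneg _)]
  ring_nf

lemma volume_convexHull_triangle (a b c : E2) :
    volume (convexHull ℝ {a, b, c}) = ENNReal.ofReal (|cross (b - a) (c - a)| / 2) := by
  have : ({a, b, c} : Set E2) = a +ᵥ ({0, b - a, c - a} : Set E2) := by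
    simp only [vadd_set_insert, vadd_set_singleton, vadd_eq_add, add_zero, add_sub_cancel]
  rw [this, convexHull_vadd, measure_vadd, volume_convexHull_zero_triangle]

theorem AffineIndependent.measure_convexHull_pos {E : Type*} [NormedAddCommGroup E]
    [NormedSpace ℝ E] [FiniteDimensional ℝ E] [MeasurableSpace E] [BorelSpace E]
    (μ : Measure E) [μ.IsOpenPosMeasure] {ι : Type*} [Fintype ι] {p : ι → E}
    (hp : AffineIndependent ℝ p) (hcard : Fintype.card ι = finrank ℝ E + 1) :
    0 < μ (convexHull ℝ (range p)) :=
  Measure.measure_pos_of_nonempty_interior μ <|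
    interior_convexHull_nonempty_iff_affineSpan_eq_top.2 <|
      hp.affineSpan_eq_top_iff_card_eq_finrank_add_one.2 hcard

lemma AffineIndependent.volume_convexHull_triangle_toReal_pos {a b c : E2}
    (h : AffineIndependent ℝ ![a, b, c]) : 0 < (volume (convexHull ℝ {a, b, c})).toReal := by
  have hrange : range ![a, b, c] = {a, b, c} := by
    rw [Matrix.range_cons, Matrix.range_cons, Matrix.range_cons, Matrix.range_empty,
      union_empty, singleton_union, singleton_union]
  refine ENNReal.toReal_pos ?_ (by rw [volume_convexHull_triangle]; exact ENNReal.ofReal_ne_top)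
  simpa only [hrange] using (h.measure_convexHull_pos volume (by simp)).ne'

lemma inner_sub_mul_norm_sub_eq_two_mul_volume {a b c n : E2} (hn : ‖n‖ = 1)
    (hab : ⟪n, b - a⟫ = 0) (hc : ⟪n, c - a⟫ < 0) :
    ⟪a - c, n⟫ * ‖b - a‖ = 2 * (volume (convexHull ℝ {a, b, c})).toReal := by
  have h := abs_inner_mul_norm_eq_abs_cross hn hab (c - a)
  rw [real_inner_comm, abs_of_neg hc] at h
  rw [volume_convexHull_triangle, ENNReal.toReal_ofReal (by positivity), ← neg_sub c a,
    inner_neg_left, real_inner_comm, h]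
  ring

theorem AffineMap.hasFDerivAt_of_finiteDimensional {E F : Type*} [NormedAddCommGroup E]
    [NormedSpace ℝ E] [FiniteDimensional ℝ E] [NormedAddCommGroup F] [NormedSpace ℝ F]
    (ψ : E →ᵃ[ℝ] F) (x : E) : HasFDerivAt ψ (LinearMap.toContinuousLinearMap ψ.linear) x :=
  (⟨ψ, ψ.continuous_of_finiteDimensional⟩ : E →ᴬ[ℝ] F).hasFDerivAt

lemma div2_affine_smul_const (ψ : E2 →ᵃ[ℝ] ℝ) (m x : E2) :
    div2 (fun y => ψ y • m) x = ψ.linear m := by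
  have hm : m = m 0 • EuclideanSpace.single 0 1 + m 1 • EuclideanSpace.single 1 1 := by
    ext i; fin_cases i <;> simp
  simp only [div2, ((ψ.hasFDerivAt_of_finiteDimensional x).smul_const m).fderiv,
    Fin.sum_univ_two, ContinuousLinearMap.smulRight_apply, real_inner_smul_left, inner_eq_coords]
  conv_rhs => rw [hm]
  simp [mul_comm]

lemma AffineMap.eq_zero_of_mem_segment {E : Type*} [AddCommGroup E] [Module ℝ E]
    (ψ : E →ᵃ[ℝ] ℝ) {a b x : E} (ha : ψ a = 0) (hb : ψ b = 0) (hx : x ∈ segment ℝ a b) :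
    ψ x = 0 := by
  have := image_segment ℝ ψ a b ▸ mem_image_of_mem ψ hx
  rwa [ha, hb, segment_same, mem_singleton_iff] at this

theorem stmt13_general
    (z z' zstar : E2) (hind : AffineIndependent ℝ ![z, z', zstar])
    (T : Set E2) (hT : T = convexHull ℝ {z, z', zstar})
    (φz : E2 →ᵃ[ℝ] ℝ) (hφz1 : φz z = 1) (hφz2 : φz z' = 0) (hφz3 : φz zstar = 0)
    (φz' : E2 →ᵃ[ℝ] ℝ) (hφz'1 : φz' z' = 1) (hφz'2 : φz' z = 0) (hφz'3 : φz' zstar = 0)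
    (μ : E2) (hμ : μ = ‖z - z'‖⁻¹ • (z - z'))
    (dstar : ℝ) (hdstar : dstar = 2 * (volume T).toReal / ‖z - z'‖)
    (κ : ℝ)
    (τ : E2 → E2) (hτ : τ = fun x => (κ * dstar⁻¹ * (φz x + φz' x)) • μ)
    (ν : E2) (hν2 : ⟪ν, z - z'⟫ = 0)
    (ν'' : E2) (hν''1 : ‖ν''‖ = 1) (hν''2 : ⟪ν'', zstar - z⟫ = 0)
    (hν''3 : ⟪ν'', z' - z⟫ < 0)
    (ν''' : E2) (hν'''1 : ‖ν'''‖ = 1) (hν'''2 : ⟪ν''', zstar - z'⟫ = 0)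
    (hν'''3 : ⟪ν''', z - z'⟫ < 0) :
    (Differentiable ℝ τ ∧ ∀ x : E2, div2 τ x = 0)
    ∧ (∀ x ∈ segment ℝ z' z, ⟪τ x, ν⟫ = 0)
    ∧ (∀ x ∈ segment ℝ z zstar, ‖zstar - z‖ * ⟪τ x, ν''⟫ = κ * (φz x - φz' x))
    ∧ (∀ x ∈ segment ℝ z' zstar, ‖zstar - z'‖ * ⟪τ x, ν'''⟫ = κ * (φz x - φz' x)) := by
  subst hT
  set A := (volume (convexHull ℝ {z, z', zstar})).toReal
  have hA : 0 < A := hind.volume_convexHull_triangle_toReal_pos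
  have hu : ‖z - z'‖ ≠ 0 :=
    norm_ne_zero_iff.2 (sub_ne_zero.2 (hind.injective.ne (by decide : (0 : Fin 3) ≠ 1)))
  have hflux (x n : E2) : ⟪τ x, n⟫ = κ * (φz x + φz' x) * (⟪z - z', n⟫ / (2 * A)) := by
    rw [hτ, hμ, hdstar, real_inner_smul_left, real_inner_smul_left]
    field_simp
  have hedge'' : ⟪z - z', ν''⟫ / (2 * A) * ‖zstar - z‖ = 1 := by
    rw [div_mul_eq_mul_div, inner_sub_mul_norm_sub_eq_two_mul_volume hν''1 hν''2 hν''3,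
      pair_comm, div_self (mul_pos two_pos hA).ne']
  have hedge''' : ⟪z - z', ν'''⟫ / (2 * A) * ‖zstar - z'‖ = -1 := by
    rw [div_mul_eq_mul_div, ← neg_sub z', inner_neg_left, neg_mul,
      inner_sub_mul_norm_sub_eq_two_mul_volume hν'''1 hν'''2 hν'''3, pair_comm, insert_comm,
      neg_div, div_self (mul_pos two_pos hA).ne']
  set ψ : E2 →ᵃ[ℝ] ℝ := (κ * dstar⁻¹) • (φz + φz')
  have hτψ : τ = fun x => ψ x • μ := by rw [hτ]; rfl
  refine ⟨⟨?_, fun x => ?_⟩, fun x _ => ?_, fun x hx => ?_, fun x hx => ?_⟩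
  · rw [hτψ]
    exact fun x => ((ψ.hasFDerivAt_of_finiteDimensional x).smul_const _).differentiableAt
  · rw [hτψ, div2_affine_smul_const, hμ, map_smul, ← vsub_eq_sub z z', ψ.linearMap_vsub]
    simp [ψ, hφz1, hφz2, hφz'1, hφz'2]
  · rw [hflux, real_inner_comm, hν2]; simp
  · rw [hflux, φz'.eq_zero_of_mem_segment hφz'2 hφz'3 hx]
    linear_combination κ * φz x * hedge''
  · rw [hflux, φz.eq_zero_of_mem_segment hφz2 hφz3 hx]
    linear_combination κ * φz' x * hedge'''

/-- Single-triangle content of Lemma 6.1 for the divergence-free short-edge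
correction `τ_S^J` of (6.2): `div τ_S^J = 0`, its normal component vanishes on
the shared short edge `S = [z', z]`, and on each remaining edge `S''` the trace
identity `|S''| τ_S^J · ν = κ_S (φ_z − φ_{z'})` holds. -/
theorem stmt13
    (z z' zstar : E2) (hind : AffineIndependent ℝ ![z, z', zstar])
    (T : Set E2) (hT : T = convexHull ℝ {z, z', zstar})
    (φz : E2 →ᵃ[ℝ] ℝ) (hφz1 : φz z = 1) (hφz2 : φz z' = 0) (hφz3 : φz zstar = 0)
    (φz' : E2 →ᵃ[ℝ] ℝ) (hφz'1 : φz' z' = 1) (hφz'2 : φz' z = 0) (hφz'3 : φz' zstar = 0)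
    (μ : E2) (hμ : μ = ‖z - z'‖⁻¹ • (z - z'))
    (dstar : ℝ) (hdstar : dstar = 2 * (volume T).toReal / ‖z - z'‖)
    (κ : ℝ)
    (τ : E2 → E2) (hτ : τ = fun x => (κ * dstar⁻¹ * (φz x + φz' x)) • μ)
    (ν : E2) (hν1 : ‖ν‖ = 1) (hν2 : ⟪ν, z - z'⟫ = 0) (hν3 : ⟪ν, zstar - z'⟫ < 0)
    (ν'' : E2) (hν''1 : ‖ν''‖ = 1) (hν''2 : ⟪ν'', zstar - z⟫ = 0)
    (hν''3 : ⟪ν'', z' - z⟫ < 0)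
    (ν''' : E2) (hν'''1 : ‖ν'''‖ = 1) (hν'''2 : ⟪ν''', zstar - z'⟫ = 0)
    (hν'''3 : ⟪ν''', z - z'⟫ < 0) :
    (Differentiable ℝ τ ∧ ∀ x : E2, div2 τ x = 0)
    ∧ (∀ x ∈ segment ℝ z' z, ⟪τ x, ν⟫ = 0)
    ∧ (∀ x ∈ segment ℝ z zstar, ‖zstar - z‖ * ⟪τ x, ν''⟫ = κ * (φz x - φz' x))
    ∧ (∀ x ∈ segment ℝ z' zstar, ‖zstar - z'‖ * ⟪τ x, ν'''⟫ = κ * (φz x - φz' x)) :=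
  stmt13_general z z' zstar hind T hT φz hφz1 hφz2 hφz3 φz' hφz'1 hφz'2 hφz'3 μ hμ dstar hdstar κ τ
    hτ ν hν2 ν'' hν''1 hν''2 hν''3 ν''' hν'''1 hν'''2 hν'''3
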